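/- arXiv:1612.03588 — 2 statements merged into one kernel-verified Lean document; each statement's English description precedes it below -/
import Mathlib

section
/- With the notation and hypotheses of the previous setup — G(qq,gam,r; t, s) = r - (r-qq)^{1-gam^t}(r-s)^{gam^t}; (q_n, gamma_n, r_n) -> (q, gamma, 1); t_n -> infinity with gamma_n^{t_n} * ln(1/(r_n-1)) -> y in (0,infinity) — let k >= 0 be a fixed integer, lambda > 0, and u in (0, y]. Write G_n(t,s) = G(q_n,gamma_n,r_n; t, s) and rhat_n = (r_n - 1)^{u * gamma_n^k / y}. Then the ratio (G_n(t_n - k, exp(-lambda*rhat_n)*G_n(k,1)) - G_n(t_n - k, exp(-lambda*rhat_n)*G_n(k,0))) / (G_n(t_n,1) - G_n(t_n,0)) converges, as n -> infinity, to (1 - e^{-u})/(1 - e^{-y}). Probabilistically, this yields P(gamma_n^{t_n-k} ln Z_n(t_n-k) <= u | T_n > t_n) -> (1-e^{-u})/(1-e^{-y}) for 0 <= u <= y. -/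
/-!
Since `G(m,s₁) - G(m,s₀) = (r-q)^{1-γ^m} ((r-s₀)^{γ^m} - (r-s₁)^{γ^m})`, along any exponents
with `γ_n^{m_n} → 0` the first two factors tend to `1-q` and `1`, and everything hinges on
`γ_n^{m_n} log(r_n - s₁)`. For the survival probability (`m = t_n`, `s₁ = 1`) this is
`-γ_n^{t_n} log(1/(r_n-1)) → -y`. For the Laplace transform (`m = t_n - k`) the point is that
`r_n - e^{-λ ε^β} G_n(k,1)`, with `ε = r_n - 1` and `β = u γ_n^k / y`, is of exact order `ε^β`:
`1 - e^{-c} ~ c` and `r_n - G_n(k,1) = O(ε^{γ_n^k})` with `γ_n^k ≥ β`. Hence its logarithm is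
`β log ε + O(1)`, and `γ_n^{t_n-k} β log ε = (u/y) γ_n^{t_n} log ε → -u`.
-/

open Filter

/-- The `t`-th iterate of the defective theta-branching reproduction law with
`θ = 0` and parameters `(qq, gam, r) ∈ [0,1) × (0,1) × (1,∞)`:
`G qq gam r t s = r - (r-qq)^{1-gam^t} (r-s)^{gam^t}`. -/
noncomputable def thetaZeroIter (qq gam r : ℝ) (t : ℕ) (s : ℝ) : ℝ :=
  r - (r - qq) ^ (1 - gam ^ t) * (r - s) ^ (gam ^ t)

open Topology Real

lemma tendsto_rpow_of_tendsto_mul_log {α : Type*} {l : Filter α} {x a : α → ℝ} {c : ℝ}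
    (hx : ∀ᶠ i in l, 0 < x i) (h : Tendsto (fun i => a i * log (x i)) l (𝓝 c)) :
    Tendsto (fun i => x i ^ a i) l (𝓝 (exp c)) := by
  refine h.rexp.congr' ?_
  filter_upwards [hx] with i hi
  rw [rpow_def_of_pos hi, mul_comm]

lemma tendsto_one_sub_exp_neg_div :
    Tendsto (fun c => (1 - exp (-c)) / c) (𝓝[≠] 0) (𝓝 1) := by
  have h := ((hasDerivAt_neg' (0 : ℝ)).exp).tendsto_slope_zero
  simp only [neg_zero, exp_zero, zero_add, smul_eq_mul, mul_neg, mul_one] at h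
  simpa only [neg_neg, neg_mul_eq_mul_neg, neg_sub, div_eq_inv_mul] using h.neg

lemma eventually_pos_of_tendsto_div {α : Type*} {l : Filter α} {g e : α → ℝ} {w : ℝ}
    (he : ∀ i, 0 < e i) (hw : 0 < w) (hg : Tendsto (fun i => g i / e i) l (𝓝 w)) :
    ∀ᶠ i in l, 0 < g i := by
  filter_upwards [hg.eventually (eventually_gt_nhds hw)] with i hi
  exact (div_pos_iff_of_pos_right (he i)).1 hi

lemma tendsto_mul_log_of_tendsto_div_rpow {α : Type*} {l : Filter α} {g ε a β : α → ℝ}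
    {w v : ℝ} (hε : ∀ i, 0 < ε i) (hw : 0 < w)
    (hg : Tendsto (fun i => g i / ε i ^ β i) l (𝓝 w)) (ha : Tendsto a l (𝓝 0))
    (haβ : Tendsto (fun i => a i * (β i * log (ε i))) l (𝓝 v)) :
    Tendsto (fun i => a i * log (g i)) l (𝓝 v) := by
  have h := (ha.mul (hg.log hw.ne')).add haβ
  rw [zero_mul, zero_add] at h
  refine h.congr' ?_
  have hεβ i : 0 < ε i ^ β i := rpow_pos_of_pos (hε i) _
  filter_upwards [eventually_pos_of_tendsto_div hεβ hw hg] with i hi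
  rw [log_div hi.ne' (hεβ i).ne', log_rpow (hε i)]
  ring

lemma tendsto_zero_of_tendsto_mul_log {α : Type*} {l : Filter α} {ε b : α → ℝ} {c : ℝ}
    (hε : Tendsto ε l (𝓝[>] 0)) (h : Tendsto (fun i => b i * log (ε i)) l (𝓝 c)) :
    Tendsto b l (𝓝 0) := by
  have hlog : Tendsto (fun i => log (ε i)) l atBot := tendsto_log_nhdsGT_zero.comp hε
  refine (h.div_atBot hlog).congr' ?_
  filter_upwards [hlog.eventually_lt_atBot 0] with i hi
  exact mul_div_cancel_right₀ _ hi.ne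

lemma tendsto_pow_sub_of_tendsto_pow {x₀ : ℝ} {x : ℕ → ℝ} {m : ℕ → ℕ} (k : ℕ)
    (hm : ∀ᶠ n in atTop, k ≤ m n) (hx : Tendsto x atTop (𝓝 x₀)) (hx₀ : x₀ ≠ 0)
    (h : Tendsto (fun n => x n ^ m n) atTop (𝓝 0)) :
    Tendsto (fun n => x n ^ (m n - k)) atTop (𝓝 0) := by
  have h' := h.div (hx.pow k) (pow_ne_zero k hx₀)
  rw [zero_div] at h'
  refine h'.congr' ?_
  filter_upwards [hm, hx.eventually_ne hx₀] with n hkm hxn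
  rw [Pi.div_apply, div_eq_iff (pow_ne_zero k hxn), pow_sub_mul_pow _ hkm]

lemma exists_tendsto_rpow_mul {α : Type*} {l : Filter α} {ε e : α → ℝ} {e₀ θ : ℝ}
    (hε : Tendsto ε l (𝓝 0)) (he : Tendsto e l (𝓝 e₀)) (he₀ : 0 < e₀) (hθ : 0 ≤ θ) :
    ∃ d, 0 ≤ d ∧ Tendsto (fun i => ε i ^ (e i * θ)) l (𝓝 d) := by
  rcases hθ.eq_or_lt with rfl | hθ
  · exact ⟨1, zero_le_one, by simpa using tendsto_const_nhds⟩
  · refine ⟨0, le_rfl, ?_⟩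
    have h := hε.rpow (he.mul_const θ) (Or.inr (mul_pos he₀ hθ))
    rwa [zero_rpow (mul_pos he₀ hθ).ne'] at h

lemma thetaZeroIter_sub_thetaZeroIter (qq gam r : ℝ) (t : ℕ) (s₁ s₀ : ℝ) :
    thetaZeroIter qq gam r t s₁ - thetaZeroIter qq gam r t s₀ =
      (r - qq) ^ (1 - gam ^ t) * ((r - s₀) ^ gam ^ t - (r - s₁) ^ gam ^ t) := by
  unfold thetaZeroIter
  ring

section

variable {qn γn rn : ℕ → ℝ} {q γ : ℝ}

lemma tendsto_thetaZeroIter_sub (hq : q < 1) (hqlim : Tendsto qn atTop (𝓝 q))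
    (hrlim : Tendsto rn atTop (𝓝 1)) {m : ℕ → ℕ} {s₁ s₀ : ℕ → ℝ} {p v : ℝ}
    (hm : Tendsto (fun n => γn n ^ m n) atTop (𝓝 0))
    (hs₀ : Tendsto (fun n => rn n - s₀ n) atTop (𝓝 p)) (hp : p ≠ 0)
    (hs₁ : ∀ᶠ n in atTop, 0 < rn n - s₁ n)
    (hlog : Tendsto (fun n => γn n ^ m n * log (rn n - s₁ n)) atTop (𝓝 (-v))) :
    Tendsto (fun n => thetaZeroIter (qn n) (γn n) (rn n) (m n) (s₁ n) -
      thetaZeroIter (qn n) (γn n) (rn n) (m n) (s₀ n)) atTop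
      (𝓝 ((1 - q) * (1 - exp (-v)))) := by
  have hX : Tendsto (fun n => (rn n - qn n) ^ (1 - γn n ^ m n)) atTop (𝓝 (1 - q)) := by
    simpa using (hrlim.sub hqlim).rpow ((tendsto_const_nhds (x := (1 : ℝ))).sub hm)
      (Or.inl (sub_ne_zero.2 hq.ne'))
  have h₀ : Tendsto (fun n => (rn n - s₀ n) ^ γn n ^ m n) atTop (𝓝 1) := by
    simpa using hs₀.rpow hm (Or.inl hp)
  simp_rw [thetaZeroIter_sub_thetaZeroIter]
  exact hX.mul (h₀.sub (tendsto_rpow_of_tendsto_mul_log hs₁ hlog))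

lemma tendsto_thetaZeroIter_const (hq : q < 1) (hqlim : Tendsto qn atTop (𝓝 q))
    (hγlim : Tendsto γn atTop (𝓝 γ)) (hrlim : Tendsto rn atTop (𝓝 1)) (k : ℕ) (s : ℝ)
    (hs : s ≠ 1 ∨ 0 < γ ^ k) :
    Tendsto (fun n => thetaZeroIter (qn n) (γn n) (rn n) k s) atTop
      (𝓝 (1 - (1 - q) ^ (1 - γ ^ k) * (1 - s) ^ γ ^ k)) :=
  hrlim.sub (((hrlim.sub hqlim).rpow (tendsto_const_nhds.sub (hγlim.pow k))
    (Or.inl (sub_ne_zero.2 hq.ne'))).mul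
    ((hrlim.sub_const s).rpow (hγlim.pow k) (hs.imp_left fun h => sub_ne_zero.2 h.symm)))

lemma tendsto_mul_rpow_nhdsGT (hγ : 0 < γ) (hγlim : Tendsto γn atTop (𝓝 γ))
    (hrlim : Tendsto rn atTop (𝓝 1)) (hrn : ∀ n, 1 < rn n) (k : ℕ) {lam ρ : ℝ}
    (hlam : 0 < lam) (hρ : 0 < ρ) :
    Tendsto (fun n => lam * (rn n - 1) ^ (ρ * γn n ^ k)) atTop (𝓝[>] 0) := by
  have hργ : 0 < ρ * γ ^ k := mul_pos hρ (pow_pos hγ k)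
  have h := (hrlim.sub_const 1).rpow ((hγlim.pow k).const_mul ρ) (Or.inr hργ)
  rw [sub_self, zero_rpow hργ.ne'] at h
  refine tendsto_nhdsWithin_iff.2 ⟨by simpa using h.const_mul lam, ?_⟩
  exact Eventually.of_forall fun n => mul_pos hlam (rpow_pos_of_pos (sub_pos.2 (hrn n)) _)

lemma exists_tendsto_gap_div_rpow (hq : q < 1) (hγ : 0 < γ) (hqlim : Tendsto qn atTop (𝓝 q))
    (hγlim : Tendsto γn atTop (𝓝 γ)) (hrlim : Tendsto rn atTop (𝓝 1)) (hrn : ∀ n, 1 < rn n)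
    (k : ℕ) {lam ρ : ℝ} (hlam : 0 < lam) (hρ : ρ ∈ Set.Ioc 0 1) :
    ∃ w > 0, Tendsto (fun n => (rn n - exp (-(lam * (rn n - 1) ^ (ρ * γn n ^ k))) *
      thetaZeroIter (qn n) (γn n) (rn n) k 1) / (rn n - 1) ^ (ρ * γn n ^ k)) atTop (𝓝 w) := by
  have hγk : 0 < γ ^ k := pow_pos hγ k
  have hε : Tendsto (fun n => rn n - 1) atTop (𝓝 0) := by simpa using hrlim.sub_const 1
  obtain ⟨d, hd, hεd⟩ := exists_tendsto_rpow_mul hε (hγlim.pow k) hγk (sub_nonneg.2 hρ.2)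
  have hX : Tendsto (fun n => (rn n - qn n) ^ (1 - γn n ^ k)) atTop
      (𝓝 ((1 - q) ^ (1 - γ ^ k))) :=
    (hrlim.sub hqlim).rpow (tendsto_const_nhds.sub (hγlim.pow k)) (Or.inl (sub_ne_zero.2 hq.ne'))
  have hc := tendsto_mul_rpow_nhdsGT hγ hγlim hrlim hrn k hlam hρ.1
  have hslope := tendsto_one_sub_exp_neg_div.comp (hc.mono_right (nhdsGT_le_nhdsNE 0))
  have hG := tendsto_thetaZeroIter_const hq hqlim hγlim hrlim k 1 (Or.inr hγk)
  rw [sub_self, zero_rpow hγk.ne', mul_zero, sub_zero] at hG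
  have hX₀ : 0 < (1 - q) ^ (1 - γ ^ k) := rpow_pos_of_pos (sub_pos.2 hq) _
  have hlim := (hX.mul hεd).add ((hslope.const_mul lam).mul hG)
  rw [mul_one, mul_one] at hlim
  refine ⟨_, by positivity, hlim.congr fun n => ?_⟩
  -- with `c = λ ε^{ργ^k}`:
  -- `(r - e^{-c} G(k,1)) / ε^{ργ^k} = X ε^{γ^k(1-ρ)} + λ (1 - e^{-c})/c · G(k,1)`
  have hεn : 0 < rn n - 1 := sub_pos.2 (hrn n)
  have hεβ : 0 < (rn n - 1) ^ (ρ * γn n ^ k) := rpow_pos_of_pos hεn _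
  have hsplit : (rn n - 1) ^ γn n ^ k =
      (rn n - 1) ^ (γn n ^ k * (1 - ρ)) * (rn n - 1) ^ (ρ * γn n ^ k) := by
    rw [← rpow_add hεn]
    ring_nf
  simp only [Function.comp_apply, thetaZeroIter, hsplit]
  field_simp
  ring

lemma tendsto_thetaZeroIter_survival (hq : q < 1) (hqlim : Tendsto qn atTop (𝓝 q))
    (hrlim : Tendsto rn atTop (𝓝 1)) (hrn : ∀ n, 1 < rn n) {t : ℕ → ℕ} {y : ℝ}
    (hb : Tendsto (fun n => γn n ^ t n) atTop (𝓝 0))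
    (hylog : Tendsto (fun n => γn n ^ t n * log (rn n - 1)) atTop (𝓝 (-y))) :
    Tendsto (fun n => thetaZeroIter (qn n) (γn n) (rn n) (t n) 1 -
      thetaZeroIter (qn n) (γn n) (rn n) (t n) 0) atTop (𝓝 ((1 - q) * (1 - exp (-y)))) :=
  tendsto_thetaZeroIter_sub (s₁ := fun _ => 1) (s₀ := fun _ => 0) hq hqlim hrlim hb
    (by simpa using hrlim) one_ne_zero (Eventually.of_forall fun n => sub_pos.2 (hrn n)) hylog

lemma tendsto_thetaZeroIter_laplace (hq : q < 1) (hγ : 0 < γ) (hqlim : Tendsto qn atTop (𝓝 q))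
    (hγlim : Tendsto γn atTop (𝓝 γ)) (hrlim : Tendsto rn atTop (𝓝 1)) (hrn : ∀ n, 1 < rn n)
    {t : ℕ → ℕ} {y : ℝ} (k : ℕ) (htk : ∀ᶠ n in atTop, k ≤ t n)
    (hb : Tendsto (fun n => γn n ^ t n) atTop (𝓝 0))
    (hylog : Tendsto (fun n => γn n ^ t n * log (rn n - 1)) atTop (𝓝 (-y)))
    {lam ρ : ℝ} (hlam : 0 < lam) (hρ : ρ ∈ Set.Ioc 0 1) :
    Tendsto (fun n =>
      thetaZeroIter (qn n) (γn n) (rn n) (t n - k)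
        (exp (-(lam * (rn n - 1) ^ (ρ * γn n ^ k))) * thetaZeroIter (qn n) (γn n) (rn n) k 1) -
      thetaZeroIter (qn n) (γn n) (rn n) (t n - k)
        (exp (-(lam * (rn n - 1) ^ (ρ * γn n ^ k))) * thetaZeroIter (qn n) (γn n) (rn n) k 0))
      atTop (𝓝 ((1 - q) * (1 - exp (-(ρ * y))))) := by
  have hε n : 0 < rn n - 1 := sub_pos.2 (hrn n)
  have ha := tendsto_pow_sub_of_tendsto_pow k htk hγlim hγ.ne' hb
  obtain ⟨w, hw, hW⟩ := exists_tendsto_gap_div_rpow hq hγ hqlim hγlim hrlim hrn k hlam hρ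
  have haβ : Tendsto (fun n => γn n ^ (t n - k) * (ρ * γn n ^ k * log (rn n - 1))) atTop
      (𝓝 (-(ρ * y))) := by
    rw [← mul_neg]
    refine (hylog.const_mul ρ).congr' ?_
    filter_upwards [htk] with n hn
    rw [← pow_sub_mul_pow (γn n) hn]
    ring
  have hc := (tendsto_mul_rpow_nhdsGT hγ hγlim hrlim hrn k hlam hρ.1).mono_right nhdsWithin_le_nhds
  have hs₀ : Tendsto (fun n => rn n - exp (-(lam * (rn n - 1) ^ (ρ * γn n ^ k))) *
      thetaZeroIter (qn n) (γn n) (rn n) k 0) atTop (𝓝 ((1 - q) ^ (1 - γ ^ k))) := by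
    simpa using hrlim.sub (hc.neg.rexp.mul
      (tendsto_thetaZeroIter_const hq hqlim hγlim hrlim k 0 (Or.inl zero_ne_one)))
  exact tendsto_thetaZeroIter_sub hq hqlim hrlim ha hs₀ (rpow_pos_of_pos (sub_pos.2 hq) _).ne'
    (eventually_pos_of_tendsto_div (fun n => rpow_pos_of_pos (hε n) _) hw hW)
    (tendsto_mul_log_of_tendsto_div_rpow hε hw hW ha haβ)

end

theorem stmt_17_general
    (q γ : ℝ) (hq : q ∈ Set.Ico (0 : ℝ) 1) (hγ : γ ∈ Set.Ioo (0 : ℝ) 1)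
    (qn γn rn : ℕ → ℝ)
    (hrn : ∀ n, 1 < rn n)
    (hqlim : Tendsto qn atTop (nhds q)) (hγlim : Tendsto γn atTop (nhds γ))
    (hrlim : Tendsto rn atTop (nhds 1))
    (t : ℕ → ℕ) (ht : Tendsto t atTop atTop)
    (y : ℝ) (hy : 0 < y)
    (hylim :
      Tendsto (fun n => γn n ^ t n * Real.log (1 / (rn n - 1))) atTop (nhds y))
    (k : ℕ) (lam : ℝ) (hlam : 0 < lam) (u : ℝ) (hu : u ∈ Set.Ioc (0 : ℝ) y) :
    Tendsto
      (fun n =>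
        (thetaZeroIter (qn n) (γn n) (rn n) (t n - k)
            (Real.exp (-(lam * (rn n - 1) ^ (u * γn n ^ k / y))) *
              thetaZeroIter (qn n) (γn n) (rn n) k 1) -
          thetaZeroIter (qn n) (γn n) (rn n) (t n - k)
            (Real.exp (-(lam * (rn n - 1) ^ (u * γn n ^ k / y))) *
              thetaZeroIter (qn n) (γn n) (rn n) k 0)) /
        (thetaZeroIter (qn n) (γn n) (rn n) (t n) 1 -
          thetaZeroIter (qn n) (γn n) (rn n) (t n) 0))
      atTop (nhds ((1 - Real.exp (-u)) / (1 - Real.exp (-y)))) := by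
  have hε0 : Tendsto (fun n => rn n - 1) atTop (𝓝[>] 0) :=
    tendsto_nhdsWithin_iff.2 ⟨by simpa using hrlim.sub_const 1,
      Eventually.of_forall fun n => sub_pos.2 (hrn n)⟩
  have hylog : Tendsto (fun n => γn n ^ t n * log (rn n - 1)) atTop (𝓝 (-y)) := by
    simpa only [one_div, log_inv, mul_neg, neg_neg] using hylim.neg
  have hb := tendsto_zero_of_tendsto_mul_log hε0 hylog
  have hρ : u / y ∈ Set.Ioc 0 1 := ⟨div_pos hu.1 hy, (div_le_one hy).2 hu.2⟩
  have hN := tendsto_thetaZeroIter_laplace hq.2 hγ.1 hqlim hγlim hrlim hrn k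
    (ht.eventually_ge_atTop k) hb hylog hlam hρ
  have hD := tendsto_thetaZeroIter_survival hq.2 hqlim hrlim hrn hb hylog
  have hq1 : 1 - q ≠ 0 := sub_ne_zero.2 hq.2.ne'
  have hy1 : 1 - exp (-y) ≠ 0 := sub_ne_zero.2 (exp_lt_one_iff.2 (neg_lt_zero.2 hy)).ne'
  have h := hN.div hD (mul_ne_zero hq1 hy1)
  rw [div_mul_cancel₀ u hy.ne', mul_div_mul_left _ _ hq1] at h
  simp only [mul_div_right_comm u]
  exact h

/-- Proposition 3(b): under the hypotheses of Proposition 3(a), for a fixed `k ≥ 0`,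
`λ > 0` and `u ∈ (0, y]`, with `r̂_n = (r_n - 1)^{u γ_n^k / y}`, the conditional
Laplace-transform ratio
`(G_n(t_n-k, e^{-λ r̂_n} G_n(k,1)) - G_n(t_n-k, e^{-λ r̂_n} G_n(k,0))) / (G_n(t_n,1) - G_n(t_n,0))`
converges to `(1-e^{-u})/(1-e^{-y})`. -/
theorem stmt_17
    (q γ : ℝ) (hq : q ∈ Set.Ico (0 : ℝ) 1) (hγ : γ ∈ Set.Ioo (0 : ℝ) 1)
    (qn γn rn : ℕ → ℝ)
    (hqn : ∀ n, qn n ∈ Set.Ico (0 : ℝ) 1)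
    (hγn : ∀ n, γn n ∈ Set.Ioo (0 : ℝ) 1)
    (hrn : ∀ n, 1 < rn n)
    (hqlim : Tendsto qn atTop (nhds q)) (hγlim : Tendsto γn atTop (nhds γ))
    (hrlim : Tendsto rn atTop (nhds 1))
    (t : ℕ → ℕ) (ht : Tendsto t atTop atTop)
    (y : ℝ) (hy : 0 < y)
    (hylim :
      Tendsto (fun n => γn n ^ t n * Real.log (1 / (rn n - 1))) atTop (nhds y))
    (k : ℕ) (lam : ℝ) (hlam : 0 < lam) (u : ℝ) (hu : u ∈ Set.Ioc (0 : ℝ) y) :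
    Tendsto
      (fun n =>
        (thetaZeroIter (qn n) (γn n) (rn n) (t n - k)
            (Real.exp (-(lam * (rn n - 1) ^ (u * γn n ^ k / y))) *
              thetaZeroIter (qn n) (γn n) (rn n) k 1) -
          thetaZeroIter (qn n) (γn n) (rn n) (t n - k)
            (Real.exp (-(lam * (rn n - 1) ^ (u * γn n ^ k / y))) *
              thetaZeroIter (qn n) (γn n) (rn n) k 0)) /
        (thetaZeroIter (qn n) (γn n) (rn n) (t n) 1 -
          thetaZeroIter (qn n) (γn n) (rn n) (t n) 0))
      atTop (nhds ((1 - Real.exp (-u)) / (1 - Real.exp (-y)))) :=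
  stmt_17_general q γ hq hγ qn γn rn hrn hqlim hγlim hrlim t ht y hy hylim k lam hlam u hu
end

section
/- For parameters (th, qq, gam, A) in (-1,0) x [0,1) x (0,1) x [1,infinity) and t a nonnegative integer, define K(th,qq,gam,A; t, s) = A - [gam^t * (A - s)^{|th|} + (1 - gam^t)*(A - qq)^{|th|}]^{1/|th|} for s in [0, A] (the t-th iterate of the corresponding defective reproduction law). Let (theta_n, gamma_n, q_n, A_n) -> (0, gamma, q, 1) with gamma in (0,1), q in [0,1), theta_n in (-1,0), gamma_n in (0,1), q_n in [0,1), A_n >= 1, and suppose |theta_n| * ln(1/(A_n - 1)) -> a for some a in (0, infinity) and t_n -> infinity with gamma_n^{t_n}/|theta_n| -> y for some y in (0,infinity). Then K(theta_n,q_n,gamma_n,A_n; t_n, 1) - K(theta_n,q_n,gamma_n,A_n; t_n, 0) converges to (1-q)*(1 - exp(-y*(1 - e^{-a}))). Probabilistically, P(T_n > t_n) -> (1-q)(1 - e^{-y(1-e^{-a})}) for the associated defective branching processes. -/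
open Filter

/-- The `t`-th iterate of the defective theta-branching reproduction law with
negative theta and parameters `(th, qq, gam, A) ∈ (-1,0) × [0,1) × (0,1) × [1,∞)`:
`K th qq gam A t s = A - [gam^t (A-s)^{|th|} + (1-gam^t)(A-qq)^{|th|}]^{1/|th|}`. -/
noncomputable def thetaNegIter (th qq gam A : ℝ) (t : ℕ) (s : ℝ) : ℝ :=
  A - (gam ^ t * (A - s) ^ |th| + (1 - gam ^ t) * (A - qq) ^ |th|) ^ |th|⁻¹

/-!
With `b = |θ|`, `g = γ^t` and `M(s) = (g (A-s)^b + (1-g) (A-q)^b)^{1/b}`, the quantity is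
`M(0) - M(1)`. Factoring out `(A-q)^b` gives `M(s) = (A-q) (1+u)^{1/b}` with
`u = g ((A-s)^b / (A-q)^b - 1)`. Since `(A-q)^b → 1` and `g/b → y`, we get `u/b → y (ℓ - 1)`
where `ℓ = lim (A-s)^b`, hence `M(s) → (1-q) e^{y(ℓ-1)}`. For `s = 0`, `ℓ = 1`; for `s = 1`,
`(A-1)^b = exp (-b log (1/(A-1))) → e^{-a}`.
-/

open Topology Real

section RpowLimits

variable {ι : Type*} {l : Filter ι}

theorem tendsto_zero_of_tendsto_div {u b : ι → ℝ} {L : ℝ} (hb0 : Tendsto b l (𝓝 0))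
    (hb : ∀ᶠ i in l, b i ≠ 0) (hu : Tendsto (fun i => u i / b i) l (𝓝 L)) :
    Tendsto u l (𝓝 0) := by
  refine (by simpa using hb0.mul hu : Tendsto (fun i => b i * (u i / b i)) l (𝓝 0)).congr' ?_
  filter_upwards [hb] with i hbi
  field_simp

theorem tendsto_one_add_rpow_inv {u b : ι → ℝ} {L : ℝ} (hb : ∀ᶠ i in l, 0 < b i)
    (hb0 : Tendsto b l (𝓝 0)) (hu : Tendsto (fun i => u i / b i) l (𝓝 L)) :
    Tendsto (fun i => (1 + u i) ^ (b i)⁻¹) l (𝓝 (exp L)) := by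
  have hu0 := tendsto_zero_of_tendsto_div hb0 (hb.mono fun i h => h.ne') hu
  have h1 : Tendsto (fun i => 1 + u i) l (𝓝 1) := by simpa using hu0.const_add 1
  have hpos : ∀ᶠ i in l, 0 < 1 + u i := h1.eventually (lt_mem_nhds one_pos)
  have hlower : Tendsto (fun i => u i / b i / (1 + u i)) l (𝓝 L) := by
    simpa [Pi.div_def] using hu.div h1 one_ne_zero
  -- `u / (1 + u) ≤ log (1 + u) ≤ u`
  have hlog : Tendsto (fun i => log (1 + u i) / b i) l (𝓝 L) := by
    refine tendsto_of_tendsto_of_tendsto_of_le_of_le' hlower hu ?_ ?_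
    · filter_upwards [hb, hpos] with i hbi hpi
      rw [div_right_comm]
      refine div_le_div_of_nonneg_right ?_ hbi.le
      calc u i / (1 + u i) = 1 - (1 + u i)⁻¹ := by field_simp; ring
        _ ≤ log (1 + u i) := one_sub_inv_le_log_of_pos hpi
    · filter_upwards [hb, hpos] with i hbi hpi
      refine div_le_div_of_nonneg_right ?_ hbi.le
      linarith [log_le_sub_one_of_pos hpi]
  refine ((continuous_exp.tendsto L).comp hlog).congr' ?_
  filter_upwards [hpos] with i hpi
  rw [Function.comp_apply, rpow_def_of_pos hpi, div_eq_mul_inv]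

theorem tendsto_weighted_rpow_mean {b g P c : ι → ℝ} {y ℓ lc : ℝ}
    (hb : ∀ᶠ i in l, 0 < b i) (hb0 : Tendsto b l (𝓝 0))
    (hg : Tendsto (fun i => g i / b i) l (𝓝 y)) (hP : Tendsto P l (𝓝 ℓ))
    (hc : Tendsto c l (𝓝 lc)) (hlc : 0 < lc) :
    Tendsto (fun i => (g i * P i + (1 - g i) * c i ^ b i) ^ (b i)⁻¹) l
      (𝓝 (lc * exp (y * (ℓ - 1)))) := by
  have hcb : Tendsto (fun i => c i ^ b i) l (𝓝 1) := by
    simpa using hc.rpow hb0 (Or.inl hlc.ne')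
  set u : ι → ℝ := fun i => g i * (P i / c i ^ b i - 1)
  have hu : Tendsto (fun i => u i / b i) l (𝓝 (y * (ℓ - 1))) := by
    have h := hg.mul ((hP.div hcb one_ne_zero).sub_const 1)
    rw [div_one] at h
    refine h.congr' (Eventually.of_forall fun i => ?_)
    simp only [u, Pi.div_apply]
    ring
  have hpos : ∀ᶠ i in l, 0 < 1 + u i :=
    ((tendsto_zero_of_tendsto_div hb0 (hb.mono fun i h => h.ne') hu).const_add 1).eventually
      (lt_mem_nhds (by norm_num))
  refine (hc.mul (tendsto_one_add_rpow_inv hb hb0 hu)).congr' ?_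
  filter_upwards [hb, hc.eventually (lt_mem_nhds hlc), hpos] with i hbi hci hpi
  have hcbi : 0 < c i ^ b i := rpow_pos_of_pos hci _
  have hsplit : g i * P i + (1 - g i) * c i ^ b i = c i ^ b i * (1 + u i) := by
    simp only [u]
    field_simp
    ring
  rw [hsplit, mul_rpow hcbi.le hpi.le, rpow_rpow_inv hci.le hbi.ne']

theorem tendsto_rpow_of_tendsto_mul_log_one_div {x b : ι → ℝ} {a : ℝ}
    (hx : ∀ᶠ i in l, 0 ≤ x i) (ha : 0 < a)
    (h : Tendsto (fun i => b i * log (1 / x i)) l (𝓝 a)) :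
    Tendsto (fun i => x i ^ b i) l (𝓝 (exp (-a))) := by
  have hxpos : ∀ᶠ i in l, 0 < x i := by
    filter_upwards [hx, h.eventually_ne ha.ne'] with i hxi hne
    refine hxi.lt_of_ne' fun h0 => hne ?_
    simp [h0]
  refine ((continuous_exp.tendsto _).comp h.neg).congr' ?_
  filter_upwards [hxpos] with i hi
  rw [Function.comp_apply, rpow_def_of_pos hi, one_div, log_inv]
  ring_nf

end RpowLimits

theorem stmt_18_general
    (q : ℝ) (hq : q ∈ Set.Ico (0 : ℝ) 1)
    (θn γn qn An : ℕ → ℝ)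
    (hθn : ∀ n, θn n ∈ Set.Ioo (-1 : ℝ) 0)
    (hAn : ∀ n, 1 ≤ An n)
    (hθlim : Tendsto θn atTop (nhds 0))
    (hqlim : Tendsto qn atTop (nhds q)) (hAlim : Tendsto An atTop (nhds 1))
    (a : ℝ) (ha : 0 < a)
    (halim :
      Tendsto (fun n => |θn n| * Real.log (1 / (An n - 1))) atTop (nhds a))
    (t : ℕ → ℕ)
    (y : ℝ)
    (hylim : Tendsto (fun n => γn n ^ t n / |θn n|) atTop (nhds y)) :
    Tendsto
      (fun n =>
        thetaNegIter (θn n) (qn n) (γn n) (An n) (t n) 1 -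
          thetaNegIter (θn n) (qn n) (γn n) (An n) (t n) 0)
      atTop
      (nhds ((1 - q) * (1 - Real.exp (-(y * (1 - Real.exp (-a))))))) := by
  have hb : ∀ᶠ n in atTop, 0 < |θn n| :=
    Eventually.of_forall fun n => abs_pos.mpr (hθn n).2.ne
  have hb0 : Tendsto (fun n => |θn n|) atTop (𝓝 0) := by simpa using hθlim.abs
  have hc : Tendsto (fun n => An n - qn n) atTop (𝓝 (1 - q)) := hAlim.sub hqlim
  have hlc : 0 < 1 - q := sub_pos.mpr hq.2
  have hA : Tendsto (fun n => An n ^ |θn n|) atTop (𝓝 1) := by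
    simpa using hAlim.rpow hb0 (Or.inl one_ne_zero)
  have hA1 : Tendsto (fun n => (An n - 1) ^ |θn n|) atTop (𝓝 (exp (-a))) :=
    tendsto_rpow_of_tendsto_mul_log_one_div
      (Eventually.of_forall fun n => sub_nonneg.mpr (hAn n)) ha halim
  have hK := (tendsto_weighted_rpow_mean hb hb0 hylim hA hc hlc).sub
    (tendsto_weighted_rpow_mean hb hb0 hylim hA1 hc hlc)
  convert hK using 2 with n
  · simp only [thetaNegIter, sub_zero]
    ring
  · rw [sub_self, mul_zero, exp_zero, show y * (exp (-a) - 1) = -(y * (1 - exp (-a))) by ring]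
    ring

/-- Proposition 4(a): if `(θ_n, γ_n, q_n, A_n) → (0, γ, q, 1)` with
`|θ_n| ln(1/(A_n-1)) → a ∈ (0,∞)` and `γ_n^{t_n}/|θ_n| → y ∈ (0,∞)` for some
`t_n → ∞`, then `P(T_n > t_n) = K_n(t_n,1) - K_n(t_n,0) → (1-q)(1-e^{-y(1-e^{-a})})`. -/
theorem stmt_18
    (q γ : ℝ) (hq : q ∈ Set.Ico (0 : ℝ) 1) (hγ : γ ∈ Set.Ioo (0 : ℝ) 1)
    (θn γn qn An : ℕ → ℝ)
    (hθn : ∀ n, θn n ∈ Set.Ioo (-1 : ℝ) 0)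
    (hγn : ∀ n, γn n ∈ Set.Ioo (0 : ℝ) 1)
    (hqn : ∀ n, qn n ∈ Set.Ico (0 : ℝ) 1)
    (hAn : ∀ n, 1 ≤ An n)
    (hθlim : Tendsto θn atTop (nhds 0)) (hγlim : Tendsto γn atTop (nhds γ))
    (hqlim : Tendsto qn atTop (nhds q)) (hAlim : Tendsto An atTop (nhds 1))
    (a : ℝ) (ha : 0 < a)
    (halim :
      Tendsto (fun n => |θn n| * Real.log (1 / (An n - 1))) atTop (nhds a))
    (t : ℕ → ℕ) (ht : Tendsto t atTop atTop)
    (y : ℝ) (hy : 0 < y)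
    (hylim : Tendsto (fun n => γn n ^ t n / |θn n|) atTop (nhds y)) :
    Tendsto
      (fun n =>
        thetaNegIter (θn n) (qn n) (γn n) (An n) (t n) 1 -
          thetaNegIter (θn n) (qn n) (γn n) (An n) (t n) 0)
      atTop
      (nhds ((1 - q) * (1 - Real.exp (-(y * (1 - Real.exp (-a))))))) :=
  stmt_18_general q hq θn γn qn An hθn hAn hθlim hqlim hAlim a ha halim t y hylim
end
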